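/- Let 0 < a < 1 and P1 > 0 be real numbers and set P2* := (√(1 + (1+a)·P1) − 1)/(1+a). Then for every P2 ≥ 0, R_s(a, P1, P2) ≤ R_s(a, P1, P2*) = g(P1/(1+a·P2*)) − g(a·P1/(1+P2*)); that is, P2* globally maximizes the achievable secrecy rate over the interferer power when a < 1. -/

import Mathlib

/-!
For `a < 1` and `P2 < P1` put `u = 1 + (1 + a) P2` and `s = √(1 + (1 + a) P1)`. The secrecy rate
is `½ log₂ (1 + (1 - a)(1 + a)² P1 · u / ((1 + a u)(u + a s²)))`, and
`(1 + a u)(u + a s²) / u = 1 + a² s² + a (u + s² / u)`, which by AM-GM is smallest at `u = s`,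
that is at `P2 = P2*`. For `P2 ≥ P1` the rate is stuck at its value for `P2 = 0`, and `P2* < P1`.
-/

noncomputable def g (x : ℝ) : ℝ := (1/2) * Real.logb 2 (1 + x)

/-- Achievable secrecy rate of the symmetric Gaussian wiretap channel
with a helping interferer. -/
noncomputable def Rs (a P1 P2 : ℝ) : ℝ :=
  if 1 + P2 ≤ a then 0
  else if 1 ≤ a then
    if P1 < P2 ∧ 1 + P1 < a then g P1 - g (a * P1 / (1 + P2))
    else if P1 < P2 ∧ a ≤ 1 + P1 then g (P1 + a * P2) - g (a * P1 + P2)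
    else 0
  else
    if P2 < P1 then g (P1 / (1 + a * P2)) - g (a * P1 / (1 + P2))
    else g P1 - g (a * P1)

open Real

/-- The branch of `Rs` for weak interference (`a < 1`) and `P2 < P1`. -/
noncomputable def RsWeak (a P1 P2 : ℝ) : ℝ := g (P1 / (1 + a * P2)) - g (a * P1 / (1 + P2))

noncomputable def P2star (a P1 : ℝ) : ℝ := (√(1 + (1 + a) * P1) - 1) / (1 + a)

noncomputable def rateShape (a s u : ℝ) : ℝ := u / ((1 + a * u) * (u + a * s ^ 2))

lemma g_sub_g {x y : ℝ} (hx : -1 < x) (hy : -1 < y) :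
    g x - g y = 1 / 2 * logb 2 ((1 + x) / (1 + y)) := by
  rw [g, g, ← mul_sub, ← logb_div (by linarith) (by linarith)]

lemma rateShape_le_rateShape_self {a s u : ℝ} (ha : 0 ≤ a) (hs : 0 < s) (hu : 0 < u) :
    rateShape a s u ≤ rateShape a s s := by
  unfold rateShape
  rw [div_le_div_iff₀ (by positivity) (by positivity)]
  have amgm : s * (1 + a * u) * (u + a * s ^ 2) - u * ((1 + a * s) * (s + a * s ^ 2))
      = a * s * (u - s) ^ 2 := by ring
  nlinarith [mul_nonneg (mul_nonneg ha hs.le) (sq_nonneg (u - s))]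

lemma RsWeak_eq_logb_rateShape {a P1 P2 s : ℝ} (ha : 0 ≤ a) (hP1 : 0 ≤ P1) (hP2 : 0 ≤ P2)
    (hs : s ^ 2 = 1 + (1 + a) * P1) :
    RsWeak a P1 P2 =
      1 / 2 * logb 2 (1 + (1 - a) * (1 + a) ^ 2 * P1 * rateShape a s (1 + (1 + a) * P2)) := by
  have hx : 0 ≤ P1 / (1 + a * P2) := by positivity
  have hy : 0 ≤ a * P1 / (1 + P2) := by positivity
  rw [RsWeak, g_sub_g (by linarith) (by linarith), rateShape, hs]
  congr 2
  field_simp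
  ring

lemma one_add_mul_P2star {a : ℝ} (ha : 0 ≤ a) (P1 : ℝ) :
    1 + (1 + a) * P2star a P1 = √(1 + (1 + a) * P1) := by
  rw [P2star]; field_simp; ring

lemma P2star_nonneg {a P1 : ℝ} (ha : 0 ≤ a) (hP1 : 0 ≤ P1) : 0 ≤ P2star a P1 :=
  div_nonneg (sub_nonneg.mpr (one_le_sqrt.mpr (by nlinarith))) (by linarith)

lemma P2star_lt {a P1 : ℝ} (ha : 0 ≤ a) (hP1 : 0 < P1) : P2star a P1 < P1 := by
  have hs : √(1 + (1 + a) * P1) ^ 2 = 1 + (1 + a) * P1 := sq_sqrt (by positivity)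
  have hs1 : 1 < √(1 + (1 + a) * P1) := (lt_sqrt zero_le_one).mpr (by nlinarith)
  rw [P2star, div_lt_iff₀ (by linarith)]
  nlinarith

lemma RsWeak_le_RsWeak_P2star {a P1 P2 : ℝ} (ha0 : 0 ≤ a) (ha1 : a ≤ 1) (hP1 : 0 ≤ P1)
    (hP2 : 0 ≤ P2) : RsWeak a P1 P2 ≤ RsWeak a P1 (P2star a P1) := by
  have hs : √(1 + (1 + a) * P1) ^ 2 = 1 + (1 + a) * P1 := sq_sqrt (by positivity)
  rw [RsWeak_eq_logb_rateShape ha0 hP1 hP2 hs,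
    RsWeak_eq_logb_rateShape ha0 hP1 (P2star_nonneg ha0 hP1) hs, one_add_mul_P2star ha0]
  have hc : 0 ≤ (1 - a) * (1 + a) ^ 2 * P1 := mul_nonneg (by nlinarith) hP1
  have hu : 0 < 1 + (1 + a) * P2 := by positivity
  have hshape : 0 ≤ rateShape a √(1 + (1 + a) * P1) (1 + (1 + a) * P2) := by
    unfold rateShape; positivity
  gcongr
  · norm_num
  · exact rateShape_le_rateShape_self ha0 (sqrt_pos.mpr (by positivity)) hu

lemma Rs_of_lt_one {a P1 P2 : ℝ} (ha : a < 1) (hP2 : 0 ≤ P2) :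
    Rs a P1 P2 = if P2 < P1 then RsWeak a P1 P2 else RsWeak a P1 0 := by
  rw [Rs, if_neg (by linarith), if_neg (by linarith)]
  simp [RsWeak]

/-- For `0 < a < 1`, `P2* = (√(1+(1+a)P1)-1)/(1+a)` globally maximizes the
secrecy rate over the interferer power, and the maximum equals
`g (P1/(1+a P2*)) - g (a P1/(1+P2*))`. -/
theorem P2star_maximizes (a P1 : ℝ) (ha0 : 0 < a) (ha1 : a < 1) (hP1 : 0 < P1) :
    (∀ P2 : ℝ, 0 ≤ P2 →
      Rs a P1 P2 ≤ Rs a P1 ((Real.sqrt (1 + (1 + a) * P1) - 1) / (1 + a))) ∧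
    Rs a P1 ((Real.sqrt (1 + (1 + a) * P1) - 1) / (1 + a)) =
      g (P1 / (1 + a * ((Real.sqrt (1 + (1 + a) * P1) - 1) / (1 + a)))) -
      g (a * P1 / (1 + (Real.sqrt (1 + (1 + a) * P1) - 1) / (1 + a))) := by
  have hstar : Rs a P1 (P2star a P1) = RsWeak a P1 (P2star a P1) := by
    rw [Rs_of_lt_one ha1 (P2star_nonneg ha0.le hP1.le), if_pos (P2star_lt ha0.le hP1)]
  refine ⟨fun P2 hP2 => ?_, hstar⟩
  rw [← P2star, hstar, Rs_of_lt_one ha1 hP2]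
  split_ifs
  · exact RsWeak_le_RsWeak_P2star ha0.le ha1.le hP1.le hP2
  · exact RsWeak_le_RsWeak_P2star ha0.le ha1.le hP1.le le_rfl
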